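/- The wreath product A ≀ H = A^(H) ⋊ H has infinite conjugacy classes (is i.c.c.) whenever A is nontrivial and H is infinite. -/

import Mathlib

/-- The restricted direct product `A^(X)`: functions `X → A` with finite
(multiplicative) support, as a subgroup of the full direct product. -/
def FinSuppSubgroup (A X : Type*) [Group A] : Subgroup (X → A) where
  carrier := {f | (Function.mulSupport f).Finite}
  one_mem' := by simp [Function.mulSupport_one]
  mul_mem' := fun hf hg => Set.Finite.subset (hf.union hg) (Function.mulSupport_mul _ _)
  inv_mem' := fun hf => by simpa [Function.mulSupport_inv] using hf

/-- A group `F` acting on the index set `X` permutes the coordinates of the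
restricted direct product `A^(X)`. -/
def permAut (A : Type*) {F X : Type*} [Group A] [Group F] [MulAction F X] :
    F →* MulAut (FinSuppSubgroup A X) where
  toFun g :=
    { toFun := fun f => ⟨fun x => (f : X → A) (g⁻¹ • x),
        Set.Finite.preimage ((MulAction.injective (g⁻¹ : F)).injOn) f.2⟩
      invFun := fun f => ⟨fun x => (f : X → A) (g • x),
        Set.Finite.preimage ((MulAction.injective g).injOn) f.2⟩
      left_inv := fun f => by ext x; simp
      right_inv := fun f => by ext x; simp
      map_mul' := fun f f' => by ext x; simp [Subgroup.coe_mul] }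
  map_one' := by ext f x; simp
  map_mul' g g' := by ext f x; simp [mul_smul]

/-- The restricted wreath product `A ≀ H` (indexed by a set `X` on which `H`
acts; the classical wreath product is `X = H` with left translation). -/
def GenWreath (A F X : Type*) [Group A] [Group F] [MulAction F X] :=
  FinSuppSubgroup A X ⋊[permAut A] F

instance (A F X : Type*) [Group A] [Group F] [MulAction F X] : Group (GenWreath A F X) :=
  inferInstanceAs (Group (FinSuppSubgroup A X ⋊[permAut A] F))

/-- The restricted (regular) wreath product `A ≀ H = A^(H) ⋊ H`,
with `H` acting by left translation on the coordinates. -/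
def WreathProduct (A H : Type*) [Group A] [Group H] := GenWreath A H H

instance (A H : Type*) [Group A] [Group H] : Group (WreathProduct A H) :=
  inferInstanceAs (Group (GenWreath A H H))

/-- A group is i.c.c. if every nontrivial element has infinite conjugacy class. -/
def ICC (G : Type*) [Group G] : Prop := ∀ g : G, g ≠ 1 → {x : G | IsConj g x}.Infinite

/-!
To show that `w = (f, h) ≠ 1` has infinitely many conjugates, we produce a family of them indexed
by an infinite set such that the conjugate with index `x` is nontrivial at a point depending
injectively on `x`; a fixed finitely supported function is then hit only finitely often.
If `h = 1`, then `f x₀ ≠ 1` for some `x₀`, and the conjugate `k • f` by `k ∈ H` is nontrivial at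
`k x₀`. If `h ≠ 1`, conjugating by the point mass `aδₓ` (`a ≠ 1`) gives `aδₓ · f · a⁻¹δ_{hx}`,
whose value at `x` is `a` whenever `x` lies outside the finite support of `f`, since `hx ≠ x`.
-/

open Function Set SemidirectProduct

theorem Set.Infinite.image_of_mem_mulSupport {α X A : Type*} [One A] {S : Set α}
    (hS : S.Infinite) {F : α → X → A} {p : α → X} (hp : Injective p)
    (hF : ∀ a ∈ S, p a ∈ mulSupport (F a)) (hfin : ∀ a ∈ S, (mulSupport (F a)).Finite) :
    (F '' S).Infinite := by
  intro himage
  have hsupp : (⋃ b ∈ F '' S, mulSupport b).Finite :=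
    himage.biUnion fun _ ⟨a, ha, hb⟩ => hb ▸ hfin a ha
  exact hS <| (hsupp.preimage hp.injOn).subset fun a ha =>
    mem_iUnion₂.2 ⟨F a, mem_image_of_mem F ha, hF a ha⟩

namespace SemidirectProduct

variable {N G : Type*} [Group N] [Group G] {φ : G →* MulAut N}

theorem isConj_inl_map (n : N) (g : G) : IsConj (inl n : N ⋊[φ] G) (inl (φ g n)) :=
  isConj_iff.2 ⟨inr g, by rw [inl_aut, map_inv]⟩

theorem isConj_mk_mul_mul_map_inv (n u : N) (g : G) :
    IsConj (⟨n, g⟩ : N ⋊[φ] G) ⟨u * n * φ g u⁻¹, g⟩ :=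
  isConj_iff.2 ⟨inl u, by ext <;> simp [mul_assoc]⟩

theorem infinite_conjugatesOf_of_infinite_image_left {α : Type*} {w : N ⋊[φ] G} {S : Set α}
    {c : α → N ⋊[φ] G} (hc : ∀ a ∈ S, IsConj w (c a))
    (hS : ((fun a => (c a).left) '' S).Infinite) : (conjugatesOf w).Infinite := by
  refine Set.Infinite.of_image left (hS.mono ?_)
  rintro _ ⟨a, ha, rfl⟩
  exact ⟨c a, hc a ha, rfl⟩

end SemidirectProduct

namespace FinSuppSubgroup

variable {A X : Type*} [Group A]

def mulSingle [DecidableEq X] (x : X) (a : A) : FinSuppSubgroup A X :=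
  ⟨Pi.mulSingle x a, (finite_singleton x).subset Pi.mulSupport_mulSingle_subset⟩

@[simp]
theorem coe_mulSingle [DecidableEq X] (x : X) (a : A) :
    (mulSingle x a : X → A) = Pi.mulSingle x a := rfl

theorem mulSupport_finite (f : FinSuppSubgroup A X) : (mulSupport (f : X → A)).Finite := f.2

end FinSuppSubgroup

@[simp]
theorem permAut_apply {A F X : Type*} [Group A] [Group F] [MulAction F X] (g : F)
    (f : FinSuppSubgroup A X) (x : X) :
    (permAut A g f : X → A) x = (f : X → A) (g⁻¹ • x) := rfl

section

variable {A H : Type*} [Group A] [Group H]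

theorem infinite_conjugatesOf_inl [Infinite H] {f : FinSuppSubgroup A H} (hf : f ≠ 1) :
    (conjugatesOf (inl f : FinSuppSubgroup A H ⋊[permAut A] H)).Infinite := by
  obtain ⟨x, hx⟩ : ∃ x, (f : H → A) x ≠ 1 := by
    by_contra! h
    exact hf (Subtype.ext (funext h))
  refine infinite_conjugatesOf_of_infinite_image_left (S := univ)
    (fun k _ => isConj_inl_map f k) (Set.Infinite.of_image Subtype.val ?_)
  rw [image_image]
  refine infinite_univ.image_of_mem_mulSupport (p := (· * x)) (mul_left_injective x)
    (fun k _ => ?_) fun k _ => FinSuppSubgroup.mulSupport_finite _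
  simpa using hx

theorem infinite_conjugatesOf_of_right_ne_one [Nontrivial A] [Infinite H]
    (f : FinSuppSubgroup A H) {h : H} (hh : h ≠ 1) :
    (conjugatesOf (⟨f, h⟩ : FinSuppSubgroup A H ⋊[permAut A] H)).Infinite := by
  classical
  obtain ⟨a, ha⟩ := exists_ne (1 : A)
  refine infinite_conjugatesOf_of_infinite_image_left (S := (mulSupport (f : H → A))ᶜ)
    (fun x _ => isConj_mk_mul_mul_map_inv f (FinSuppSubgroup.mulSingle x a) h)
    (Set.Infinite.of_image Subtype.val ?_)
  rw [image_image]
  refine (FinSuppSubgroup.mulSupport_finite f).infinite_compl.image_of_mem_mulSupport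
    (p := id) injective_id (fun x hx => ?_) fun x _ => FinSuppSubgroup.mulSupport_finite _
  have hmove : h⁻¹ * x ≠ x := by simpa using hh
  simpa [Pi.mulSingle_eq_of_ne hmove, notMem_mulSupport.1 hx] using ha

end

/-- the restricted wreath product `A ≀ H = A^(H) ⋊ H` is i.c.c.
whenever `A` is nontrivial and `H` is infinite. -/
theorem wreathProduct_icc (A H : Type*) [Group A] [Group H]
    [Nontrivial A] [Infinite H] : ICC (WreathProduct A H) := by
  rintro ⟨f, h⟩ hw
  by_cases hh : h = 1
  · subst hh
    exact infinite_conjugatesOf_inl fun hf => hw (by subst hf; rfl)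
  · exact infinite_conjugatesOf_of_right_ne_one f hh
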